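/- arXiv:1701.07460 — 3 statements merged into one kernel-verified Lean document; each statement's English description precedes it below -/
import Mathlib

section
/- For every positive integer n, r_2(n) = 4(d_{1,4}(n) − d_{3,4}(n)), where d_{j,4}(n) denotes the number of divisors of n congruent to j modulo 4. -/
open scoped BigOperators

/-- Number of representations of `n` as an ordered sum of `k` squares of integers. -/
noncomputable def rsq (k n : ℕ) : ℕ :=
  Nat.card {v : Fin k → ℤ // ∑ i, (v i) ^ 2 = (n : ℤ)}

/-!
Ordered representations `n = a² + b²` are the Gaussian integers of norm `n`. For `c ≠ 0` of norm
`q`, `w ↦ c w` matches the elements of norm `n` with the elements of norm `q n` divisible by `c`.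
If a rational prime `p` divides `N z = z z̄`, a Gaussian prime `π ∣ p` divides `z` or `z̄`. So for
`p = 2` every such `z` is divisible by `1 + i`, for `p ≡ 3 mod 4` by `p`, and for `p ≡ 1 mod 4`,
where `p = π π̄` with `π ∤ π̄`, inclusion–exclusion over `π ∣ z` and `π̄ ∣ z` applies. In each case
`g k = r₂(p^k a)` with `p ∤ a` satisfies `g 1 = (1 + x) g 0` and
`g (k + 2) = (1 + x) g (k + 1) - x g k` for `x = χ₄(p)`, so `r₂(p^k a) = (1 + x + ⋯ + x^k) r₂(a)`.
The divisor sum `∑_{d ∣ n} χ₄(d)` factors the same way, and both sides agree at `n = 1`.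
-/

open Finset ZMod

local notation "ℤ[i]" => GaussianInt

theorem eq_geom_sum_mul_of_recurrence {R : Type*} [CommRing R] {u : ℕ → R} {x : R}
    (h1 : u 1 = (1 + x) * u 0) (h2 : ∀ k, u (k + 2) = (1 + x) * u (k + 1) - x * u k) (k : ℕ) :
    u k = (∑ i ∈ range (k + 1), x ^ i) * u 0 := by
  have hstep (k : ℕ) : u (k + 1) = u k + x ^ (k + 1) * u 0 := by
    induction k with
    | zero => rw [h1]; ring
    | succ k ih => rw [h2, ih]; ring
  induction k with
  | zero => simp
  | succ k ih => rw [hstep, ih, sum_range_succ _ (k + 1)]; ring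

open ArithmeticFunction in
theorem sum_divisors_χ₄_mul {m n : ℕ} (h : m.Coprime n) :
    ∑ d ∈ (m * n).divisors, χ₄ d = (∑ d ∈ m.divisors, χ₄ d) * ∑ d ∈ n.divisors, χ₄ d := by
  have hconv (k : ℕ) : ∑ d ∈ k.divisors, χ₄ d =
      ((zeta : ArithmeticFunction ℕ) * toArithmeticFunction (χ₄ ·) : ArithmeticFunction ℤ) k := by
    rw [coe_zeta_mul_apply]
    exact sum_congr rfl fun d hd => by
      simp [toArithmeticFunction, (Nat.pos_of_mem_divisors hd).ne']
  simp only [hconv]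
  exact (isMultiplicative_zeta.natCast.mul
    (DirichletCharacter.isMultiplicative_toArithmeticFunction χ₄)).map_mul_of_coprime h

theorem sum_χ₄_eq_card_filter_sub_card_filter (s : Finset ℕ) :
    ∑ d ∈ s, χ₄ d = (#(s.filter (· % 4 = 1)) : ℤ) - #(s.filter (· % 4 = 3)) := by
  rw [card_filter, card_filter, Nat.cast_sum, Nat.cast_sum, ← sum_sub_distrib]
  refine sum_congr rfl fun d _ => ?_
  rw [χ₄_nat_eq_if_mod_four]
  split_ifs <;> omega

namespace GaussianInt

noncomputable def normEq (n : ℕ) : Finset ℤ[i] :=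
  ((Icc (-n : ℤ) n ×ˢ Icc (-n : ℤ) n).image fun p => ⟨p.1, p.2⟩).filter (·.norm = n)

theorem mem_normEq {n : ℕ} {z : ℤ[i]} : z ∈ normEq n ↔ z.norm = n := by
  refine ⟨fun h => (mem_filter.mp h).2,
    fun h => mem_filter.mpr ⟨mem_image.mpr ⟨(z.re, z.im), ?_, rfl⟩, h⟩⟩
  rw [Zsqrtd.norm_def] at h
  simp only [mem_product, mem_Icc]
  refine ⟨⟨?_, ?_⟩, ?_, ?_⟩ <;>
    nlinarith [sq_nonneg (z.re + 1), sq_nonneg (z.re - 1), sq_nonneg (z.im + 1),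
      sq_nonneg (z.im - 1)]

theorem card_normEq_one : #(normEq 1) = 4 := by decide

open scoped Classical

theorem card_filter_dvd_normEq {c : ℤ[i]} (hc : c ≠ 0) {q : ℕ} (hq : c.norm = q) (n : ℕ) :
    #((normEq (q * n)).filter (c ∣ ·)) = #(normEq n) := by
  have hq0 : (q : ℤ) ≠ 0 := hq ▸ (Zsqrtd.norm_eq_zero_iff (by norm_num) c).not.mpr hc
  suffices (normEq (q * n)).filter (c ∣ ·) = (normEq n).image (c * ·) by
    rw [this, card_image_of_injective _ (mul_right_injective₀ hc)]
  ext z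
  simp only [mem_filter, mem_image, mem_normEq]
  constructor
  · rintro ⟨hz, w, rfl⟩
    rw [Zsqrtd.norm_mul, hq, Nat.cast_mul] at hz
    exact ⟨w, mul_left_cancel₀ hq0 hz, rfl⟩
  · rintro ⟨w, hw, rfl⟩
    exact ⟨by rw [Zsqrtd.norm_mul, hq, hw]; push_cast; ring, dvd_mul_right c w⟩

theorem prime_of_natAbs_norm_prime {z : ℤ[i]} (hz : z.norm.natAbs.Prime) : Prime z := by
  refine Irreducible.prime ⟨fun hu => hz.ne_one (Zsqrtd.norm_eq_one_iff.mpr hu), fun x y hxy => ?_⟩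
  rw [hxy, Zsqrtd.norm_mul, Int.natAbs_mul, Nat.prime_mul_iff] at hz
  rcases hz with ⟨-, hy⟩ | ⟨-, hx⟩
  · exact .inr (Zsqrtd.norm_eq_one_iff.mp hy)
  · exact .inl (Zsqrtd.norm_eq_one_iff.mp hx)

theorem natCast_dvd_of_norm_eq {π : ℤ[i]} {q : ℕ} (hπ : π.norm = q) : π ∣ (q : ℤ[i]) :=
  ⟨star π, by rw [← Zsqrtd.norm_eq_mul_conj, hπ, Int.cast_natCast]⟩

theorem dvd_or_star_dvd_of_mem_normEq {π z : ℤ[i]} {q n : ℕ} (hπ : Prime π)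
    (hq : π ∣ (q : ℤ[i])) (hz : z ∈ normEq (q * n)) : π ∣ z ∨ star π ∣ z := by
  have h : π ∣ z * star z := by
    rw [← Zsqrtd.norm_eq_mul_conj, mem_normEq.mp hz]
    push_cast
    exact hq.mul_right _
  refine (hπ.dvd_or_dvd h).imp_right fun ⟨v, hv⟩ => ⟨star v, ?_⟩
  simpa [mul_comm] using congrArg star hv

theorem filter_natCast_dvd_normEq_eq_empty {p a : ℕ} (hp : p ≠ 0) (ha : ¬p ∣ a) :
    (normEq (p * a)).filter ((p : ℤ[i]) ∣ ·) = ∅ := by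
  refine filter_eq_empty_iff.mpr fun z hz ⟨w, hw⟩ => ha ?_
  rw [mem_normEq, hw, Zsqrtd.norm_mul, Zsqrtd.norm_natCast, Nat.cast_mul, mul_assoc] at hz
  exact Int.natCast_dvd_natCast.mp ⟨_, (mul_left_cancel₀ (Nat.cast_ne_zero.mpr hp) hz).symm⟩

theorem card_normEq_two_mul (n : ℕ) : #(normEq (2 * n)) = #(normEq n) := by
  let π : ℤ[i] := ⟨1, 1⟩
  have hπ : π.norm = (2 : ℕ) := rfl
  have hprime : Prime π := prime_of_natAbs_norm_prime (by rw [hπ]; norm_num)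
  have hstar : star π = π * ⟨0, -1⟩ := rfl
  rw [← card_filter_dvd_normEq hprime.ne_zero hπ n, filter_true_of_mem]
  intro z hz
  refine (dvd_or_star_dvd_of_mem_normEq hprime (natCast_dvd_of_norm_eq hπ) hz).elim id ?_
  rw [hstar]
  exact (dvd_mul_right _ _).trans

theorem natCast_dvd_of_mem_normEq {p n : ℕ} [Fact p.Prime] (hp3 : p % 4 = 3) {z : ℤ[i]}
    (hz : z ∈ normEq (p * n)) : (p : ℤ[i]) ∣ z := by
  have hprime := prime_of_nat_prime_of_mod_four_eq_three p hp3
  simpa using dvd_or_star_dvd_of_mem_normEq hprime dvd_rfl hz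

theorem exists_prime_norm_eq_not_dvd_star {p : ℕ} (hp : p.Prime) (hp1 : p % 4 = 1) :
    ∃ π : ℤ[i], π.norm = p ∧ Prime π ∧ ¬π ∣ star π := by
  have := Fact.mk hp
  obtain ⟨a, b, hab⟩ := Nat.Prime.sq_add_sq (p := p) (by omega)
  let π : ℤ[i] := ⟨a, b⟩
  have hπ : π.norm = p := by
    rw [Zsqrtd.norm_def, ← hab]
    push_cast
    ring
  refine ⟨π, hπ, prime_of_natAbs_norm_prime (by rw [hπ]; exact hp), fun h => ?_⟩
  -- `π ∣ π + π̄ = 2a` gives `p ∣ a`, hence `p ∣ b` and `p² ∣ a² + b² = p`.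
  have h2a : π ∣ ((2 * a : ℕ) : ℤ[i]) := by
    have : ((2 * a : ℕ) : ℤ[i]) = π + star π := Zsqrtd.ext (by simp; ring) (by simp)
    exact this ▸ dvd_add dvd_rfl h
  have hpa : p ∣ a := by
    have h : π.norm ∣ ((2 * a : ℕ) : ℤ[i]).norm := map_dvd Zsqrtd.normMonoidHom h2a
    rw [hπ, Zsqrtd.norm_natCast] at h
    norm_cast at h
    have h2 : ¬p ∣ 2 := fun h2 => by
      have := Nat.le_of_dvd two_pos h2
      have := hp.two_le
      omega
    exact (hp.dvd_mul.mp ((hp.dvd_mul.mp h).elim id id)).resolve_left h2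
  have hpb : p ∣ b := by
    refine hp.dvd_of_dvd_pow (n := 2) <| (Nat.dvd_add_right (dvd_pow hpa two_ne_zero)).mp ?_
    rw [hab]
  have hp2 : p ^ 2 ∣ p := by
    nth_rewrite 2 [← hab]
    exact dvd_add (pow_dvd_pow_of_dvd hpa 2) (pow_dvd_pow_of_dvd hpb 2)
  have := Nat.le_of_dvd hp.pos hp2
  nlinarith [hp.two_le]

theorem card_normEq_prime_mul_add_card_filter {p : ℕ} (hp : p.Prime) (hp1 : p % 4 = 1) (n : ℕ) :
    #(normEq (p * n)) + #((normEq (p * n)).filter ((p : ℤ[i]) ∣ ·)) = 2 * #(normEq n) := by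
  obtain ⟨π, hπ, hprime, hndvd⟩ := exists_prime_norm_eq_not_dvd_star hp hp1
  have hπ' : (star π).norm = p := by rw [Zsqrtd.norm_conj, hπ]
  have hp' : (p : ℤ[i]) = π * star π := by
    rw [← Zsqrtd.norm_eq_mul_conj, hπ, Int.cast_natCast]
  set S := normEq (p * n)
  have hunion : S.filter (π ∣ ·) ∪ S.filter (star π ∣ ·) = S := by
    rw [← filter_or]
    exact filter_true_of_mem fun z hz =>
      dvd_or_star_dvd_of_mem_normEq hprime (natCast_dvd_of_norm_eq hπ) hz
  have hinter : S.filter (π ∣ ·) ∩ S.filter (star π ∣ ·) = S.filter ((p : ℤ[i]) ∣ ·) := by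
    rw [← filter_and, hp']
    refine filter_congr fun z _ =>
      ⟨?_, fun h => ⟨(dvd_mul_right _ _).trans h, (dvd_mul_left _ _).trans h⟩⟩
    rintro ⟨hπz, y, rfl⟩
    rw [mul_comm π]
    exact mul_dvd_mul_left _ ((hprime.dvd_or_dvd hπz).resolve_left hndvd)
  have := card_union_add_card_inter (S.filter (π ∣ ·)) (S.filter (star π ∣ ·))
  rwa [hunion, hinter, card_filter_dvd_normEq hprime.ne_zero hπ,
    card_filter_dvd_normEq (star_ne_zero.mpr hprime.ne_zero) hπ', ← two_mul] at this

theorem card_normEq_prime_mul {p a : ℕ} (hp : p.Prime) (ha : ¬p ∣ a) :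
    (#(normEq (p * a)) : ℤ) = (1 + χ₄ p) * #(normEq a) := by
  have := Fact.mk hp
  have hempty := filter_natCast_dvd_normEq_eq_empty hp.ne_zero ha
  rcases hp.eq_two_or_odd with rfl | hodd
  · rw [card_normEq_two_mul]
    simp
  rcases Nat.odd_mod_four_iff.mp hodd with hp1 | hp3
  · have := card_normEq_prime_mul_add_card_filter hp hp1 a
    rw [hempty, card_empty, add_zero] at this
    rw [χ₄_nat_one_mod_four hp1, this]
    push_cast
    ring
  · have : normEq (p * a) = ∅ := by
      rw [← hempty, filter_true_of_mem fun z hz => natCast_dvd_of_mem_normEq hp3 hz]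
    rw [this, χ₄_nat_three_mod_four hp3]
    simp

theorem card_normEq_prime_mul_prime_mul {p : ℕ} (hp : p.Prime) (n : ℕ) :
    (#(normEq (p * (p * n))) : ℤ) = (1 + χ₄ p) * #(normEq (p * n)) - χ₄ p * #(normEq n) := by
  have := Fact.mk hp
  have hfilter : #((normEq (p * (p * n))).filter ((p : ℤ[i]) ∣ ·)) = #(normEq n) := by
    rw [← mul_assoc]
    exact card_filter_dvd_normEq (Nat.cast_ne_zero.mpr hp.ne_zero) (Zsqrtd.norm_natCast p) n
  rcases hp.eq_two_or_odd with rfl | hodd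
  · rw [card_normEq_two_mul]
    simp
  rcases Nat.odd_mod_four_iff.mp hodd with hp1 | hp3
  · have := card_normEq_prime_mul_add_card_filter hp hp1 (p * n)
    rw [hfilter] at this
    rw [χ₄_nat_one_mod_four hp1]
    omega
  · rw [← hfilter, filter_true_of_mem fun z hz => natCast_dvd_of_mem_normEq hp3 hz,
      χ₄_nat_three_mod_four hp3]
    ring

theorem card_normEq_prime_pow_mul {p a : ℕ} (hp : p.Prime) (ha : ¬p ∣ a) (k : ℕ) :
    (#(normEq (p ^ k * a)) : ℤ) = (∑ i ∈ range (k + 1), χ₄ p ^ i) * #(normEq a) := by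
  have h1 : (#(normEq (p ^ 1 * a)) : ℤ) = (1 + χ₄ p) * #(normEq (p ^ 0 * a)) := by
    simpa using card_normEq_prime_mul hp ha
  have h2 (k : ℕ) : (#(normEq (p ^ (k + 2) * a)) : ℤ) =
      (1 + χ₄ p) * #(normEq (p ^ (k + 1) * a)) - χ₄ p * #(normEq (p ^ k * a)) := by
    rw [show p ^ (k + 2) * a = p * (p * (p ^ k * a)) by ring,
      show p ^ (k + 1) * a = p * (p ^ k * a) by ring]
    exact card_normEq_prime_mul_prime_mul hp (p ^ k * a)
  simpa using eq_geom_sum_mul_of_recurrence (u := fun k => (#(normEq (p ^ k * a)) : ℤ)) h1 h2 k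

theorem card_normEq_eq_four_mul_sum_divisors {n : ℕ} (hn : 0 < n) :
    (#(normEq n) : ℤ) = 4 * ∑ d ∈ n.divisors, χ₄ d := by
  induction n using Nat.recOnPrimePow with
  | zero => omega
  | one => simp [card_normEq_one]
  | prime_pow_mul a p k hp hpa _ ih =>
    rw [card_normEq_prime_pow_mul hp hpa, ih (Nat.pos_of_mul_pos_left hn),
      sum_divisors_χ₄_mul ((hp.coprime_iff_not_dvd.mpr hpa).pow_left k),
      Nat.sum_divisors_prime_pow hp]
    simp only [Nat.cast_pow, map_pow]
    ring

end GaussianInt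

theorem rsq_two_eq_card_normEq (n : ℕ) : rsq 2 n = #(GaussianInt.normEq n) := by
  rw [rsq, ← Nat.card_eq_finsetCard]
  refine Nat.card_congr
    ⟨fun v => ⟨⟨v.1 0, v.1 1⟩, ?_⟩, fun z => ⟨![z.1.re, z.1.im], ?_⟩, fun v => ?_, fun z => rfl⟩
  · rw [GaussianInt.mem_normEq, Zsqrtd.norm_def]
    linear_combination (Fin.sum_univ_two _).symm.trans v.2
  · rw [Fin.sum_univ_two, ← GaussianInt.mem_normEq.mp z.2, Zsqrtd.norm_def]
    simp only [Matrix.cons_val_zero, Matrix.cons_val_one]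
    ring
  · ext i
    fin_cases i <;> rfl

theorem jacobi_two_squares (n : ℕ) (hn : 0 < n) :
    (rsq 2 n : ℤ) =
      4 * (((n.divisors.filter (fun d => d % 4 = 1)).card : ℤ) -
           ((n.divisors.filter (fun d => d % 4 = 3)).card : ℤ)) := by
  rw [rsq_two_eq_card_normEq, GaussianInt.card_normEq_eq_four_mul_sum_divisors hn,
    sum_χ₄_eq_card_filter_sub_card_filter]
end

section
/- Quadratic transformation: for |z| < 1 with |4z/(1+z)^2| < 1, ₂F₁(a, b; a−b+1; z) = (1+z)^{−a} ₂F₁(a/2, (a+1)/2; a−b+1; 4z/(1+z)^2). -/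
open scoped Real

/-- Modified Bessel function of the first kind (principal branch). -/
noncomputable def besselI (ν z : ℂ) : ℂ :=
  ∑' m : ℕ, (z / 2) ^ (2 * (m : ℂ) + ν) / ((m.factorial : ℂ) * Complex.Gamma ((m : ℂ) + 1 + ν))

/-- Modified Bessel function of the second kind. -/
noncomputable def besselK (ν z : ℂ) : ℂ :=
  (↑Real.pi / 2) * (besselI (-ν) z - besselI ν z) / Complex.sin (ν * ↑Real.pi)

/-- Gauss hypergeometric function ₂F₁, defined by its power series. -/
noncomputable def hyp2F1 (a b c z : ℂ) : ℂ :=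
  ∑' n : ℕ, ((ascPochhammer ℂ n).eval a * (ascPochhammer ℂ n).eval b) /
    ((ascPochhammer ℂ n).eval c * (n.factorial : ℂ)) * z ^ n

/-!
For small `z` write
`(1 + z) ^ (-a) * (4 * z / (1 + z) ^ 2) ^ n = 4 ^ n * z ^ n * (1 + z) ^ (-a - 2 * n)`
and expand the last factor by the binomial series. The resulting double series converges
absolutely when `4 * ‖z‖ < (1 - ‖z‖) ^ 2`. Summed by rows it is the right-hand side; summed along
the diagonals `n + k = m` it gives, by the duplication formula
`(a)_{2n} = 4 ^ n * (a / 2)_n * ((a + 1) / 2)_n` and Chu–Vandermonde, the `m`-th coefficient of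
`₂F₁(a, b; a - b + 1)`. Both sides are analytic on `{z | ‖z‖ < 1 ∧ ‖4 * z / (1 + z) ^ 2‖ < 1}`,
which is star-shaped about `0`, so the identity theorem extends the equality to all of it.
-/

open Finset Polynomial
open scoped Nat

section Pochhammer

variable {R : Type*} [CommRing R]

theorem ascPochhammer_add_eval (x : R) (n m : ℕ) :
    (ascPochhammer R (n + m)).eval x =
      (ascPochhammer R n).eval x * (ascPochhammer R m).eval (x + n) := by
  simp [← ascPochhammer_mul, eval_comp]

theorem ascPochhammer_eval_neg_sub_add_one (x : R) (k : ℕ) :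
    (ascPochhammer R k).eval (-x - k + 1) = (-1) ^ k * (ascPochhammer R k).eval x := by
  rw [show -x - k + 1 = -(x + k - 1) by ring, ascPochhammer_eval_neg_eq_descPochhammer,
    descPochhammer_eval_eq_ascPochhammer, show x + k - 1 - k + 1 = x by ring]

theorem descPochhammer_smeval_neg (x : R) (k : ℕ) :
    (descPochhammer ℤ k).smeval (-x) = (-1) ^ k * (ascPochhammer R k).eval x := by
  rw [descPochhammer_smeval_eq_ascPochhammer, ascPochhammer_smeval_eq_eval,
    ascPochhammer_eval_neg_sub_add_one]

theorem ascPochhammer_eval_add (x y : R) (m : ℕ) :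
    (ascPochhammer R m).eval (x + y) = ∑ ij ∈ antidiagonal m,
      (m.choose ij.1 : R) * ((ascPochhammer R ij.1).eval x * (ascPochhammer R ij.2).eval y) := by
  have h := Ring.descPochhammer_smeval_add m (Commute.all (-x) (-y))
  rw [← neg_add, descPochhammer_smeval_neg] at h
  have hsign : ∀ ij ∈ antidiagonal m, (m.choose ij.1 : R) *
      ((descPochhammer ℤ ij.1).smeval (-x) * (descPochhammer ℤ ij.2).smeval (-y)) =
      (-1) ^ m * ((m.choose ij.1 : R) *
        ((ascPochhammer R ij.1).eval x * (ascPochhammer R ij.2).eval y)) := by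
    rintro ⟨i, j⟩ hij
    rw [HasAntidiagonal.mem_antidiagonal] at hij
    rw [descPochhammer_smeval_neg, descPochhammer_smeval_neg, ← hij, pow_add]
    ring
  rw [sum_congr rfl hsign, ← mul_sum] at h
  have hsq : ((-1 : R) ^ m) * (-1) ^ m = 1 := by rw [← mul_pow]; simp
  rw [← one_mul (eval _ _), ← hsq, mul_assoc, h, ← mul_assoc, hsq, one_mul]

theorem sum_antidiagonal_choose_mul_ascPochhammer_eval (a b : R) (m : ℕ) :
    ∑ nk ∈ antidiagonal m, (m.choose nk.1 : R) * (ascPochhammer R (m + nk.1)).eval a *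
        ((-1) ^ nk.2 * (ascPochhammer R nk.2).eval (a - b + 1 + nk.1)) =
      (ascPochhammer R m).eval a * (ascPochhammer R m).eval b := by
  have hterm : ∀ nk ∈ antidiagonal m,
      (m.choose nk.1 : R) * (ascPochhammer R (m + nk.1)).eval a *
        ((-1) ^ nk.2 * (ascPochhammer R nk.2).eval (a - b + 1 + nk.1)) =
      (ascPochhammer R m).eval a * ((m.choose nk.1 : R) *
        ((ascPochhammer R nk.1).eval (a + m) * (ascPochhammer R nk.2).eval (b - a - m))) := by
    rintro ⟨n, k⟩ hnk
    obtain rfl : n + k = m := HasAntidiagonal.mem_antidiagonal.1 hnk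
    rw [← ascPochhammer_eval_neg_sub_add_one, ascPochhammer_add_eval,
      show -(a - b + 1 + n) - k + 1 = b - a - (n + k : ℕ) by push_cast; ring]
    ring
  rw [sum_congr rfl hterm, ← mul_sum, ← ascPochhammer_eval_add,
    show a + m + (b - a - m) = b by ring]

end Pochhammer

section Coefficients

variable {K : Type*} [Field K] [CharZero K]

theorem ascPochhammer_eval_two_mul (x : K) (n : ℕ) :
    (ascPochhammer K (2 * n)).eval x =
      4 ^ n * (ascPochhammer K n).eval (x / 2) * (ascPochhammer K n).eval ((x + 1) / 2) := by
  induction n with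
  | zero => simp
  | succ n ih =>
    rw [show 2 * (n + 1) = 2 * n + 1 + 1 by ring, ascPochhammer_succ_eval, ascPochhammer_succ_eval,
      ih, ascPochhammer_succ_eval, ascPochhammer_succ_eval]
    push_cast
    ring

theorem ordinaryHypergeometricCoefficient_eq_sum_antidiagonal (a b : K) (m : ℕ)
    (hc : (ascPochhammer K m).eval (a - b + 1) ≠ 0) :
    ordinaryHypergeometricCoefficient a b (a - b + 1) m =
      ∑ nk ∈ antidiagonal m,
        ordinaryHypergeometricCoefficient (a / 2) ((a + 1) / 2) (a - b + 1) nk.1 * 4 ^ nk.1 *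
          ((-1) ^ nk.2 * (ascPochhammer K nk.2).eval (a + 2 * nk.1) / nk.2 !) := by
  set c := a - b + 1
  have hterm : ∀ nk ∈ antidiagonal m,
      ordinaryHypergeometricCoefficient (a / 2) ((a + 1) / 2) c nk.1 * 4 ^ nk.1 *
        ((-1) ^ nk.2 * (ascPochhammer K nk.2).eval (a + 2 * nk.1) / nk.2 !) =
      (m.choose nk.1 : K) * (ascPochhammer K (m + nk.1)).eval a *
        ((-1) ^ nk.2 * (ascPochhammer K nk.2).eval (c + nk.1)) /
          ((ascPochhammer K m).eval c * m !) := by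
    rintro ⟨n, k⟩ hnk
    rw [HasAntidiagonal.mem_antidiagonal] at hnk
    subst hnk
    have hc' := hc
    rw [ascPochhammer_add_eval] at hc'
    rw [ascPochhammer_add_eval c, show n + k + n = 2 * n + k by ring, ascPochhammer_add_eval,
      ascPochhammer_eval_two_mul, Nat.cast_choose K (Nat.le_add_right n k), Nat.add_sub_cancel_left]
    have := (n + k).factorial_ne_zero
    field_simp [left_ne_zero_of_mul hc', right_ne_zero_of_mul hc']
    push_cast
    ring
  rw [sum_congr rfl hterm, ← sum_div, sum_antidiagonal_choose_mul_ascPochhammer_eval]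
  field_simp

end Coefficients

theorem Ring.choose_add_sub_one_eq_ascPochhammer_eval_div {K : Type*} [Field K] [CharZero K]
    (a : K) (n : ℕ) : Ring.choose (a + n - 1) n = (ascPochhammer K n).eval a / n ! := by
  rw [← Ring.multichoose_eq, eq_div_iff (Nat.cast_ne_zero.2 n.factorial_ne_zero), mul_comm,
    ← nsmul_eq_mul, Ring.factorial_nsmul_multichoose_eq_ascPochhammer,
    ascPochhammer_smeval_eq_eval]

theorem Complex.hasSum_one_sub_cpow_neg (s : ℂ) {z : ℂ} (hz : ‖z‖ < 1) :
    HasSum (fun k ↦ (ascPochhammer ℂ k).eval s / k ! * z ^ k) ((1 - z) ^ (-s)) := by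
  have := (Complex.one_div_one_sub_cpow_hasFPowerSeriesOnBall_zero s).hasSum
    (y := z) (by simpa [enorm_eq_nnnorm, ← NNReal.coe_lt_coe] using hz)
  simp only [zero_add, FormalMultilinearSeries.ofScalars_apply_eq, smul_eq_mul,
    Ring.choose_add_sub_one_eq_ascPochhammer_eval_div] at this
  rwa [Complex.cpow_neg, ← one_div]

theorem Real.hasSum_one_sub_rpow_neg (v : ℝ) {t : ℝ} (ht : |t| < 1) :
    HasSum (fun k ↦ (ascPochhammer ℝ k).eval v / k ! * t ^ k) ((1 - t) ^ (-v)) := by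
  have := (Real.one_div_one_sub_rpow_hasFPowerSeriesOnBall_zero v).hasSum
    (y := t) (by simpa [enorm_eq_nnnorm, ← NNReal.coe_lt_coe] using ht)
  simp only [zero_add, FormalMultilinearSeries.ofScalars_apply_eq, smul_eq_mul,
    Ring.choose_add_sub_one_eq_ascPochhammer_eval_div] at this
  rwa [Real.rpow_neg (by linarith [le_abs_self t]), ← one_div]

theorem norm_ascPochhammer_eval_le {R : Type*} [NormedCommRing R] [NormOneClass R] {x : R}
    {r : ℝ} (hx : ‖x‖ ≤ r) (k : ℕ) : ‖(ascPochhammer R k).eval x‖ ≤ (ascPochhammer ℝ k).eval r := by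
  induction k with
  | zero => simp
  | succ k ih =>
    rw [ascPochhammer_succ_eval, ascPochhammer_succ_eval]
    refine (norm_mul_le _ _).trans (mul_le_mul ih ?_ (norm_nonneg _) ((norm_nonneg _).trans ih))
    exact (norm_add_le _ _).trans (add_le_add hx (by simpa using Nat.norm_cast_le (α := R) k))

theorem HasSum.sum_antidiagonal {A α : Type*} [AddMonoid A] [HasAntidiagonal A] [AddCommMonoid α]
    [TopologicalSpace α] [ContinuousAdd α] [RegularSpace α] {f : A × A → α} {a : α}
    (hf : HasSum f a) : HasSum (fun m ↦ ∑ nk ∈ antidiagonal m, f nk) a := by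
  refine (HasAntidiagonal.sigmaAntidiagonalEquivProd.hasSum_iff.mpr hf).sigma fun m ↦ ?_
  rw [← Finset.sum_coe_sort]
  exact hasSum_fintype _

section RCLike

variable {𝕂 𝔸 : Type*} [RCLike 𝕂] [NormedDivisionRing 𝔸] [NormedAlgebra 𝕂 𝔸]

theorem ordinaryHypergeometricSeries_one_le_radius (a b c : 𝕂) :
    1 ≤ (ordinaryHypergeometricSeries 𝔸 a b c).radius := by
  by_cases habc : ∀ k : ℕ, (k : 𝕂) ≠ -a ∧ (k : 𝕂) ≠ -b ∧ (k : 𝕂) ≠ -c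
  · rw [ordinaryHypergeometricSeries_radius_eq_one 𝔸 a b c habc]
  push Not at habc
  obtain ⟨k, hk⟩ := habc
  by_cases ha : (k : 𝕂) = -a
  · rw [← neg_neg a, ← ha, ordinaryHypergeometric_radius_top_of_neg_nat₁]
    exact le_top
  by_cases hb : (k : 𝕂) = -b
  · rw [← neg_neg b, ← hb, ordinaryHypergeometric_radius_top_of_neg_nat₂]
    exact le_top
  rw [← neg_neg c, ← hk ha hb, ordinaryHypergeometric_radius_top_of_neg_nat₃]
  exact le_top

theorem ball_subset_eball_radius_ordinaryHypergeometricSeries (a b c : 𝕂) :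
    Metric.ball (0 : 𝔸) 1 ⊆ Metric.eball 0 (ordinaryHypergeometricSeries 𝔸 a b c).radius := by
  calc Metric.ball (0 : 𝔸) 1 = Metric.eball 0 1 := by simpa using (Metric.eball_coe (ε := 1)).symm
    _ ⊆ _ := Metric.eball_subset_eball (ordinaryHypergeometricSeries_one_le_radius a b c)

theorem analyticOnNhd_ordinaryHypergeometric [CompleteSpace 𝔸] (a b c : 𝕂) :
    AnalyticOnNhd 𝕂 (ordinaryHypergeometric a b c : 𝔸 → 𝔸) (Metric.ball 0 1) :=
  ((ordinaryHypergeometricSeries 𝔸 a b c).hasFPowerSeriesOnBall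
    (zero_lt_one.trans_le (ordinaryHypergeometricSeries_one_le_radius a b c))).analyticOnNhd.mono
      (ball_subset_eball_radius_ordinaryHypergeometricSeries a b c)

theorem summable_norm_ordinaryHypergeometricCoefficient_mul_pow (a b c : 𝕂) {x : 𝕂}
    (hx : ‖x‖ < 1) : Summable fun n ↦ ‖ordinaryHypergeometricCoefficient a b c n * x ^ n‖ := by
  simpa only [ordinaryHypergeometricSeries_apply_eq, smul_eq_mul] using
    (ordinaryHypergeometricSeries 𝕂 a b c).summable_norm_apply
      (ball_subset_eball_radius_ordinaryHypergeometricSeries a b c (mem_ball_zero_iff.2 hx))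

end RCLike

theorem hyp2F1_eq_tsum (a b c z : ℂ) :
    hyp2F1 a b c z = ∑' n, ordinaryHypergeometricCoefficient a b c n * z ^ n := by
  rw [hyp2F1]
  congr! 2 with n
  field_simp

theorem hyp2F1_eq_ordinaryHypergeometric (a b c : ℂ) :
    hyp2F1 a b c = ordinaryHypergeometric a b c := by
  ext z
  simp only [hyp2F1_eq_tsum, ordinaryHypergeometric_eq_tsum, smul_eq_mul]

section DoubleSeries

variable (a c z : ℂ)

/-- The `(n, k)` term of `(1 + z) ^ (-a) * ₂F₁(a / 2, (a + 1) / 2; c; 4 * z / (1 + z) ^ 2)` once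
`(1 + z) ^ (-a - 2 * n)` is expanded by the binomial series. -/
noncomputable def quadraticDoubleTerm (nk : ℕ × ℕ) : ℂ :=
  ordinaryHypergeometricCoefficient (a / 2) ((a + 1) / 2) c nk.1 * 4 ^ nk.1 * z ^ nk.1 *
    ((ascPochhammer ℂ nk.2).eval (a + 2 * nk.1) / nk.2 ! * (-z) ^ nk.2)

variable {z}

theorem hasSum_quadraticDoubleTerm_row (hz : ‖z‖ < 1) (n : ℕ) :
    HasSum (fun k ↦ quadraticDoubleTerm a c z (n, k)) ((1 + z) ^ (-a) *
      (ordinaryHypergeometricCoefficient (a / 2) ((a + 1) / 2) c n *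
        (4 * z / (1 + z) ^ 2) ^ n)) := by
  set Q := ordinaryHypergeometricCoefficient (a / 2) ((a + 1) / 2) c n
  have hz0 : 1 + z ≠ 0 := Complex.slitPlane_ne_zero (Complex.mem_slitPlane_of_norm_lt_one hz)
  have hpow : (1 + z) ^ (-(a + 2 * n)) = (1 + z) ^ (-a) * ((1 + z) ^ 2)⁻¹ ^ n := by
    rw [neg_add, Complex.cpow_add _ _ hz0, Complex.cpow_neg _ (2 * n),
      show (2 * n : ℂ) = ((2 * n : ℕ) : ℂ) by push_cast; ring, Complex.cpow_natCast, pow_mul,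
      inv_pow]
  have hsum : (1 + z) ^ (-a) * (Q * (4 * z / (1 + z) ^ 2) ^ n) =
      Q * 4 ^ n * z ^ n * (1 + z) ^ (-(a + 2 * n)) := by
    rw [hpow, div_pow, mul_pow, div_eq_mul_inv, inv_pow]
    ring
  rw [hsum, ← sub_neg_eq_add 1 z]
  simp only [quadraticDoubleTerm]
  exact (Complex.hasSum_one_sub_cpow_neg _ (by rwa [norm_neg])).mul_left _

theorem sum_antidiagonal_quadraticDoubleTerm (b : ℂ) (hc : ∀ n : ℕ, a - b + 1 ≠ -n) (m : ℕ) :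
    ∑ nk ∈ antidiagonal m, quadraticDoubleTerm a (a - b + 1) z nk =
      ordinaryHypergeometricCoefficient a b (a - b + 1) m * z ^ m := by
  have hcm : (ascPochhammer ℂ m).eval (a - b + 1) ≠ 0 := by
    rw [Ne, ascPochhammer_eval_eq_zero_iff]
    rintro ⟨k, -, hk⟩
    exact hc k (by rw [hk, neg_neg])
  rw [ordinaryHypergeometricCoefficient_eq_sum_antidiagonal a b m hcm, sum_mul]
  refine sum_congr rfl fun nk hnk ↦ ?_
  rw [HasAntidiagonal.mem_antidiagonal] at hnk
  rw [quadraticDoubleTerm, ← hnk, neg_pow, pow_add]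
  ring

theorem summable_quadraticDoubleTerm (hz : ‖z‖ < 1) (hsmall : 4 * ‖z‖ < (1 - ‖z‖) ^ 2) :
    Summable (quadraticDoubleTerm a c z) := by
  set t := ‖z‖
  set Q := ordinaryHypergeometricCoefficient (a / 2) ((a + 1) / 2) c
  set u := 4 * t / (1 - t) ^ 2
  have ht : 0 < 1 - t := by linarith
  have hu : 0 ≤ u := by positivity
  set S : ℕ × ℕ → ℝ := fun nk ↦ ‖Q nk.1‖ * 4 ^ nk.1 * t ^ nk.1 *
    ((ascPochhammer ℝ nk.2).eval (‖a‖ + 2 * nk.1) / nk.2 ! * t ^ nk.2)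
  have hTS : ∀ nk, ‖quadraticDoubleTerm a c z nk‖ ≤ S nk := by
    rintro ⟨n, k⟩
    have hP : ‖(ascPochhammer ℂ k).eval (a + 2 * n)‖ ≤ (ascPochhammer ℝ k).eval (‖a‖ + 2 * n) :=
      norm_ascPochhammer_eval_le ((norm_add_le _ _).trans (by simp)) k
    simp only [quadraticDoubleTerm, S, norm_mul, norm_div, norm_pow, norm_neg,
      Complex.norm_natCast, RCLike.norm_ofNat]
    gcongr
    simp [Q]
  have hrow : ∀ n : ℕ, HasSum (fun k ↦ S (n, k)) ((1 - t) ^ (-‖a‖) * (‖Q n‖ * u ^ n)) := by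
    intro n
    have hpow : (1 - t) ^ (-(‖a‖ + 2 * n)) = (1 - t) ^ (-‖a‖) * ((1 - t) ^ 2)⁻¹ ^ n := by
      rw [neg_add, Real.rpow_add ht, Real.rpow_neg ht.le (2 * n),
        show (2 * n : ℝ) = ((2 * n : ℕ) : ℝ) by push_cast; ring, Real.rpow_natCast, pow_mul,
        inv_pow]
    have hsum : (1 - t) ^ (-‖a‖) * (‖Q n‖ * u ^ n) =
        ‖Q n‖ * 4 ^ n * t ^ n * (1 - t) ^ (-(‖a‖ + 2 * n)) := by
      rw [hpow, div_pow, mul_pow, div_eq_mul_inv, inv_pow]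
      ring
    rw [hsum]
    exact (Real.hasSum_one_sub_rpow_neg _ (by rwa [abs_of_nonneg (norm_nonneg z)])).mul_left _
  have hrows : Summable fun n : ℕ ↦ (1 - t) ^ (-‖a‖) * (‖Q n‖ * u ^ n) := by
    have hu1 : ‖(u : ℂ)‖ < 1 := by
      rwa [Complex.norm_real, Real.norm_of_nonneg hu, div_lt_one (by positivity)]
    refine ((summable_norm_ordinaryHypergeometricCoefficient_mul_pow (a / 2) ((a + 1) / 2) c
      hu1).mul_left ((1 - t) ^ (-‖a‖))).congr fun n ↦ ?_
    rw [norm_mul, norm_pow, Complex.norm_real, Real.norm_of_nonneg hu]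
  have hS0 : 0 ≤ S := fun nk ↦ (norm_nonneg _).trans (hTS nk)
  exact Summable.of_norm_bounded ((summable_prod_of_nonneg hS0).2
    ⟨fun n ↦ (hrow n).summable, hrows.congr fun n ↦ (hrow n).tsum_eq.symm⟩) hTS

end DoubleSeries

theorem hyp2F1_quadratic_transformation_of_small (a b : ℂ) (hc : ∀ n : ℕ, a - b + 1 ≠ -n)
    {z : ℂ} (hz : ‖z‖ < 1) (hsmall : 4 * ‖z‖ < (1 - ‖z‖) ^ 2) :
    hyp2F1 a b (a - b + 1) z =
      (1 + z) ^ (-a) * hyp2F1 (a / 2) ((a + 1) / 2) (a - b + 1) (4 * z / (1 + z) ^ 2) := by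
  have hT := (summable_quadraticDoubleTerm a (a - b + 1) hz hsmall).hasSum
  calc hyp2F1 a b (a - b + 1) z
      = ∑' m, ∑ nk ∈ antidiagonal m, quadraticDoubleTerm a (a - b + 1) z nk := by
        simp only [hyp2F1_eq_tsum, sum_antidiagonal_quadraticDoubleTerm a b hc]
    _ = ∑' n, ∑' k, quadraticDoubleTerm a (a - b + 1) z (n, k) := by
        rw [hT.sum_antidiagonal.tsum_eq, hT.summable.tsum_prod]
    _ = _ := by
        simp only [(hasSum_quadraticDoubleTerm_row a _ hz _).tsum_eq, tsum_mul_left,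
          hyp2F1_eq_tsum]

def quadraticTransformationDomain : Set ℂ := {z | ‖z‖ < 1 ∧ ‖4 * z / (1 + z) ^ 2‖ < 1}

theorem norm_four_mul_div_one_add_sq_lt_one_iff {v : ℂ} (hv : ‖v‖ < 1) :
    ‖4 * v / (1 + v) ^ 2‖ < 1 ↔ 4 * ‖v‖ < 1 + 2 * v.re + ‖v‖ ^ 2 := by
  have hv0 : 1 + v ≠ 0 := Complex.slitPlane_ne_zero (Complex.mem_slitPlane_of_norm_lt_one hv)
  rw [norm_div, norm_mul, norm_pow, RCLike.norm_ofNat, div_lt_one (by positivity),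
    Complex.sq_norm, Complex.sq_norm, Complex.normSq_apply, Complex.normSq_apply]
  simp only [Complex.add_re, Complex.add_im, Complex.one_re, Complex.one_im]
  constructor <;> intro h <;> linarith

theorem starConvex_quadraticTransformationDomain :
    StarConvex ℝ 0 quadraticTransformationDomain := by
  rintro v ⟨hv, hw⟩ r s hr hs hrs
  have hs1 : s ≤ 1 := by linarith
  have hsv : ‖(s : ℂ) * v‖ = s * ‖v‖ := by
    rw [norm_mul, Complex.norm_real, Real.norm_of_nonneg hs]
  have hsv1 : ‖(s : ℂ) * v‖ < 1 := by
    rw [hsv]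
    nlinarith [norm_nonneg v]
  rw [smul_zero, zero_add, Complex.real_smul]
  refine ⟨hsv1, ?_⟩
  rw [norm_four_mul_div_one_add_sq_lt_one_iff hsv1, hsv, Complex.re_ofReal_mul]
  rw [norm_four_mul_div_one_add_sq_lt_one_iff hv] at hw
  have hre := Complex.re_le_norm v
  have hv0 := norm_nonneg v
  -- `f s := 1 + 2 s Re v + s² ‖v‖² - 4 s ‖v‖` satisfies
  -- `f s = f 1 + (1 - s) (4 ‖v‖ - 2 Re v - (1 + s) ‖v‖²)`, and the last factor is `≥ 0`.
  nlinarith [mul_nonneg (sub_nonneg.2 hs1)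
    (by nlinarith : 0 ≤ 4 * ‖v‖ - 2 * v.re - (1 + s) * ‖v‖ ^ 2)]

theorem analyticOnNhd_hyp2F1_quadraticTransformationDomain (a b c : ℂ) :
    AnalyticOnNhd ℂ (hyp2F1 a b c) quadraticTransformationDomain := by
  rw [hyp2F1_eq_ordinaryHypergeometric]
  exact (analyticOnNhd_ordinaryHypergeometric a b c).mono fun z hz ↦ mem_ball_zero_iff.2 hz.1

theorem analyticOnNhd_hyp2F1_quadratic_rhs (a c : ℂ) :
    AnalyticOnNhd ℂ
      (fun z ↦ (1 + z) ^ (-a) * hyp2F1 (a / 2) ((a + 1) / 2) c (4 * z / (1 + z) ^ 2))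
      quadraticTransformationDomain := by
  rintro z ⟨hz, hw⟩
  have hz0 : 1 + z ∈ Complex.slitPlane := Complex.mem_slitPlane_of_norm_lt_one hz
  have hw' : AnalyticAt ℂ (fun z : ℂ ↦ 4 * z / (1 + z) ^ 2) z :=
    (analyticAt_const.mul analyticAt_id).div ((analyticAt_const.add analyticAt_id).pow 2)
      (pow_ne_zero 2 (Complex.slitPlane_ne_zero hz0))
  rw [hyp2F1_eq_ordinaryHypergeometric]
  exact ((analyticAt_const.add analyticAt_id).cpow analyticAt_const hz0).mul <|
    AnalyticAt.comp (f := fun z : ℂ ↦ 4 * z / (1 + z) ^ 2)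
      (analyticOnNhd_ordinaryHypergeometric _ _ c _ (mem_ball_zero_iff.2 hw)) hw'

theorem hyp2F1_quadratic_transformation (a b z : ℂ)
    (hc : ∀ n : ℕ, a - b + 1 ≠ -(n : ℂ))
    (hz : ‖z‖ < 1) (hz2 : ‖4 * z / (1 + z) ^ 2‖ < 1) :
    hyp2F1 a b (a - b + 1) z =
      (1 + z) ^ (-a) * hyp2F1 (a / 2) ((a + 1) / 2) (a - b + 1) (4 * z / (1 + z) ^ 2) := by
  have h0 : (0 : ℂ) ∈ quadraticTransformationDomain := by simp [quadraticTransformationDomain]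
  have hsmall : ∀ᶠ v in nhds (0 : ℂ), hyp2F1 a b (a - b + 1) v =
      (1 + v) ^ (-a) * hyp2F1 (a / 2) ((a + 1) / 2) (a - b + 1) (4 * v / (1 + v) ^ 2) := by
    filter_upwards [Metric.ball_mem_nhds (0 : ℂ) (by norm_num : (0 : ℝ) < 1 / 8)] with v hv
    rw [mem_ball_zero_iff] at hv
    exact hyp2F1_quadratic_transformation_of_small a b hc (by linarith)
      (by nlinarith [norm_nonneg v])
  exact (analyticOnNhd_hyp2F1_quadraticTransformationDomain a b _)
    |>.eqOn_of_preconnected_of_eventuallyEq (analyticOnNhd_hyp2F1_quadratic_rhs a _)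
    (starConvex_quadraticTransformationDomain.isPathConnected h0).isConnected.isPreconnected h0
    hsmall ⟨hz, hz2⟩
end

section
/- Hardy-type identity for sums of squares (Corollary): for any integer k ≥ 2 and real β > 0, Σ_{n=0}^∞ r_k(n) e^{−2π√(nβ)} = √β · Γ((k+1)/2) / π^{(k+1)/2} · Σ_{n=0}^∞ r_k(n)/(n+β)^{(k+1)/2}, where r_k(0) := 1. -/
open scoped BigOperators Real

/-!
Both sides are sums over the lattice `ℤ^k`, with `n = |v|²`. The subordination formula
`e^{-2√c} = π^{-1/2} ∫₀^∞ e^{-t - c/t} t^{-1/2} dt` (substitute `t = s²` and use the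
Cauchy–Schlömilch identity `∫₀^∞ e^{-(s - a/s)²} ds = √π / 2`) turns the left side into an
integral of the theta function `Σ_v e^{-π²β|v|²/t}`. Jacobi's transformation
`θ(πβ/t) = (t/(πβ))^{k/2} θ(t/(πβ))`, a consequence of Poisson summation, followed by the
Gamma integral `∫₀^∞ t^{s-1} e^{-(1 + |v|²/β) t} dt = Γ(s) (1 + |v|²/β)^{-s}` with
`s = (k+1)/2`, gives the right side. All sums and integrals are taken in `ℝ≥0∞`, so Tonelli's
theorem justifies every interchange.
-/

open scoped ENNReal
open MeasureTheory Set Real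

lemma finite_setOf_sum_sq_eq (k n : ℕ) : {v : Fin k → ℤ | ∑ i, v i ^ 2 = (n : ℤ)}.Finite := by
  refine (Set.finite_Icc (fun _ ↦ -(n : ℤ)) fun _ ↦ (n : ℤ)).subset fun v hv ↦ ?_
  have hvi (i : Fin k) : v i ^ 2 ≤ n :=
    hv ▸ Finset.single_le_sum (fun j _ ↦ sq_nonneg (v j)) (Finset.mem_univ i)
  exact ⟨fun i ↦ show -(n : ℤ) ≤ v i by nlinarith [hvi i, sq_nonneg (v i + 1)],
    fun i ↦ show v i ≤ n by nlinarith [hvi i, sq_nonneg (v i - 1)]⟩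

lemma tsum_comp_sum_sq_eq_tsum_rsq (k : ℕ) (g : ℝ → ℝ≥0∞) :
    ∑' v : Fin k → ℤ, g (∑ i, (v i : ℝ) ^ 2) = ∑' n : ℕ, rsq k n * g n := by
  rw [← (Equiv.sigmaFiberEquiv fun v : Fin k → ℤ ↦ (∑ i, v i ^ 2).toNat).tsum_eq,
    ENNReal.tsum_sigma']
  refine tsum_congr fun n ↦ ?_
  have hiff (v : Fin k → ℤ) : (∑ i, v i ^ 2).toNat = n ↔ ∑ i, v i ^ 2 = (n : ℤ) := by
    have : 0 ≤ ∑ i, v i ^ 2 := Finset.sum_nonneg fun i _ ↦ sq_nonneg (v i)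
    omega
  calc ∑' v : {v : Fin k → ℤ // (∑ i, v i ^ 2).toNat = n},
        g (∑ i, ((Equiv.sigmaFiberEquiv _ ⟨n, v⟩ : Fin k → ℤ) i : ℝ) ^ 2)
      = ∑' _ : {v : Fin k → ℤ // (∑ i, v i ^ 2).toNat = n}, g n := by
        refine tsum_congr fun v ↦ congrArg g ?_
        exact_mod_cast (hiff v).1 v.2
    _ = rsq k n * g n := by
        have : Finite {v : Fin k → ℤ // ∑ i, v i ^ 2 = (n : ℤ)} :=
          (finite_setOf_sum_sq_eq k n).to_subtype
        rw [ENNReal.tsum_const, ENat.card_congr (Equiv.subtypeEquivRight hiff),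
          ENat.card_eq_coe_natCard, rsq]
        rfl

lemma tsum_rsq_mul_eq_toReal_tsum (k : ℕ) {f : ℝ → ℝ} (hf : ∀ n : ℕ, 0 ≤ f n) :
    ∑' n : ℕ, (rsq k n : ℝ) * f n =
      (∑' v : Fin k → ℤ, ENNReal.ofReal (f (∑ i, (v i : ℝ) ^ 2))).toReal := by
  rw [tsum_comp_sum_sq_eq_tsum_rsq k fun x ↦ ENNReal.ofReal (f x),
    ENNReal.tsum_toReal_eq fun n ↦ ENNReal.mul_ne_top (by simp) ENNReal.ofReal_ne_top]
  simp [ENNReal.toReal_ofReal (hf _)]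

lemma ENNReal.tsum_pi_prod_eq_pow {α : Type*} (k : ℕ) (h : α → ℝ≥0∞) :
    ∑' v : Fin k → α, ∏ i, h (v i) = (∑' x, h x) ^ k := by
  induction k with
  | zero => simp
  | succ k ih =>
    rw [← (Fin.consEquiv fun _ ↦ α).tsum_eq, ENNReal.tsum_prod', pow_succ', ← ih,
      ← ENNReal.tsum_mul_right]
    refine tsum_congr fun x ↦ ?_
    rw [← ENNReal.tsum_mul_left]
    exact tsum_congr fun w ↦ Fin.prod_univ_succ _

lemma summable_exp_neg_pi_mul_int_sq {a : ℝ} (ha : 0 < a) :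
    Summable fun n : ℤ ↦ exp (-π * a * n ^ 2) := by
  have := ((summable_jacobiTheta₂_term_iff 0 (a * Complex.I)).mpr (by simpa using ha)).norm
  simpa [norm_jacobiTheta₂_term, mul_right_comm _ a] using this

lemma tsum_ofReal_exp_neg_pi_mul_int_sq {a : ℝ} (ha : 0 < a) :
    ∑' n : ℤ, ENNReal.ofReal (exp (-π * a * n ^ 2)) =
      ENNReal.ofReal (a ^ (-(1 / 2) : ℝ)) *
        ∑' n : ℤ, ENNReal.ofReal (exp (-π / a * n ^ 2)) := by
  have hdiv : Summable fun n : ℤ ↦ exp (-π / a * n ^ 2) := by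
    simpa [div_eq_mul_inv, mul_assoc] using summable_exp_neg_pi_mul_int_sq (inv_pos.mpr ha)
  rw [← ENNReal.ofReal_tsum_of_nonneg (fun _ ↦ (exp_pos _).le)
      (summable_exp_neg_pi_mul_int_sq ha),
    ← ENNReal.ofReal_tsum_of_nonneg (fun _ ↦ (exp_pos _).le) hdiv,
    ← ENNReal.ofReal_mul (by positivity), tsum_exp_neg_mul_int_sq ha, rpow_neg ha.le, one_div]

lemma tsum_lattice_ofReal_exp_neg_pi_mul {k : ℕ} {a : ℝ} (ha : 0 < a) :
    ∑' v : Fin k → ℤ, ENNReal.ofReal (exp (-π * a * ∑ i, (v i : ℝ) ^ 2)) =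
      ENNReal.ofReal (a ^ (-(k / 2) : ℝ)) *
        ∑' v : Fin k → ℤ, ENNReal.ofReal (exp (-π / a * ∑ i, (v i : ℝ) ^ 2)) := by
  have hprod (c : ℝ) (v : Fin k → ℤ) : ENNReal.ofReal (exp (c * ∑ i, (v i : ℝ) ^ 2)) =
      ∏ i, ENNReal.ofReal (exp (c * (v i : ℝ) ^ 2)) := by
    rw [Finset.mul_sum, exp_sum, ENNReal.ofReal_prod_of_nonneg fun i _ ↦ (exp_pos _).le]
  simp_rw [hprod (-π * a), hprod (-π / a)]
  rw [ENNReal.tsum_pi_prod_eq_pow k fun x : ℤ ↦ ENNReal.ofReal (exp (-π * a * x ^ 2)),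
    ENNReal.tsum_pi_prod_eq_pow k fun x : ℤ ↦ ENNReal.ofReal (exp (-π / a * x ^ 2)),
    tsum_ofReal_exp_neg_pi_mul_int_sq ha, mul_pow, ← ENNReal.ofReal_pow (rpow_nonneg ha.le _),
    ← rpow_natCast, ← rpow_mul ha.le]
  congr 3
  ring

lemma tsum_lattice_ofReal_exp_neg_pi_sq_mul_div {k : ℕ} {β t : ℝ} (hβ : 0 < β) (ht : 0 < t) :
    ∑' v : Fin k → ℤ, ENNReal.ofReal (exp (-(π ^ 2 * β * (∑ i, (v i : ℝ) ^ 2) / t))) =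
      ENNReal.ofReal ((π * β) ^ (-(k / 2) : ℝ) * t ^ (k / 2 : ℝ)) *
        ∑' v : Fin k → ℤ, ENNReal.ofReal (exp (-((∑ i, (v i : ℝ) ^ 2) / β * t))) := by
  have ha : 0 < π * β / t := by positivity
  have hscale :
      (π * β / t) ^ (-(k / 2) : ℝ) = (π * β) ^ (-(k / 2) : ℝ) * t ^ (k / 2 : ℝ) := by
    rw [div_rpow (by positivity) ht.le, rpow_neg ht.le, div_inv_eq_mul]
  convert tsum_lattice_ofReal_exp_neg_pi_mul (k := k) ha using 4 with v
  · field_simp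
  · rw [hscale]
  · field_simp

section ChangeOfVariables

variable {a : ℝ}

lemma hasDerivAt_const_div {s : ℝ} (hs : s ≠ 0) :
    HasDerivAt (fun s ↦ a / s) (-(a / s ^ 2)) s := by
  simpa [div_eq_mul_inv] using (hasDerivAt_inv hs).const_mul a

lemma image_const_div_Ioi_zero (ha : 0 < a) : (fun s ↦ a / s) '' Ioi 0 = Ioi 0 :=
  Subset.antisymm (image_subset_iff.mpr fun _ hs ↦ div_pos ha hs)
    fun x hx ↦ ⟨a / x, div_pos ha hx, div_div_cancel₀ ha.ne'⟩

lemma injOn_const_div_Ioi_zero (ha : 0 < a) : InjOn (fun s ↦ a / s) (Ioi 0) :=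
  fun x hx y hy h ↦ by
    rw [div_eq_div_iff (ne_of_gt hx) (ne_of_gt hy)] at h
    exact (mul_left_cancel₀ ha.ne' h).symm

lemma integral_Ioi_div_sq_mul_comp_const_div (ha : 0 < a) (f : ℝ → ℝ) :
    ∫ s in Ioi 0, a / s ^ 2 * f (a / s) = ∫ s in Ioi 0, f s := by
  have h := integral_image_eq_integral_abs_deriv_smul measurableSet_Ioi
    (fun s hs ↦ (hasDerivAt_const_div (ne_of_gt hs)).hasDerivWithinAt)
    (injOn_const_div_Ioi_zero ha) f
  rw [image_const_div_Ioi_zero ha] at h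
  rw [h]
  refine setIntegral_congr_fun measurableSet_Ioi fun s hs ↦ ?_
  rw [abs_neg, abs_of_pos (div_pos ha (pow_pos hs 2)), smul_eq_mul]

lemma integrableOn_Ioi_div_sq_mul_comp_const_div_iff (ha : 0 < a) (f : ℝ → ℝ) :
    IntegrableOn (fun s ↦ a / s ^ 2 * f (a / s)) (Ioi 0) ↔ IntegrableOn f (Ioi 0) := by
  have h := integrableOn_image_iff_integrableOn_abs_deriv_smul measurableSet_Ioi
    (fun s hs ↦ (hasDerivAt_const_div (ne_of_gt hs)).hasDerivWithinAt)
    (injOn_const_div_Ioi_zero ha) f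
  rw [image_const_div_Ioi_zero ha] at h
  rw [h]
  refine integrableOn_congr_fun (fun s hs ↦ ?_) measurableSet_Ioi
  rw [abs_neg, abs_of_pos (div_pos ha (pow_pos hs 2)), smul_eq_mul]

lemma image_sub_const_div_Ioi_zero (ha : 0 < a) : (fun s ↦ s - a / s) '' Ioi 0 = univ := by
  refine eq_univ_of_forall fun w ↦ ?_
  have hD : √(w ^ 2 + 4 * a) ^ 2 = w ^ 2 + 4 * a := sq_sqrt (by positivity)
  have hwD : |w| < √(w ^ 2 + 4 * a) := by
    rw [← sqrt_sq_eq_abs]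
    exact sqrt_lt_sqrt (sq_nonneg w) (by linarith)
  set s := (w + √(w ^ 2 + 4 * a)) / 2 with hs_def
  have hs : 0 < s := by linarith [neg_abs_le w]
  have hs2 : s ^ 2 = w * s + a := by rw [hs_def]; nlinarith
  refine ⟨s, hs, ?_⟩
  field_simp
  linarith

lemma integral_Ioi_one_add_div_sq_mul_comp_sub_const_div (ha : 0 < a) (g : ℝ → ℝ) :
    ∫ s in Ioi 0, (1 + a / s ^ 2) * g (s - a / s) = ∫ u, g u := by
  have hderiv (s : ℝ) (hs : s ∈ Ioi 0) :
      HasDerivWithinAt (fun s ↦ s - a / s) (1 + a / s ^ 2) (Ioi 0) s := by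
    simpa using
      ((hasDerivAt_id' s).fun_sub (hasDerivAt_const_div (ne_of_gt hs))).hasDerivWithinAt
  have hmono : StrictMonoOn (fun s ↦ s - a / s) (Ioi 0) := fun x hx y hy hxy ↦ by
    have : a / y < a / x := div_lt_div_of_pos_left ha hx hxy
    simp only
    linarith
  have h := integral_image_eq_integral_abs_deriv_smul measurableSet_Ioi hderiv hmono.injOn g
  rw [image_sub_const_div_Ioi_zero ha, setIntegral_univ] at h
  rw [h]
  refine setIntegral_congr_fun measurableSet_Ioi fun s hs ↦ ?_
  rw [abs_of_pos (by positivity : 0 < 1 + a / s ^ 2), smul_eq_mul]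

end ChangeOfVariables

lemma lintegral_ofReal_eq_ofReal_integral_of_integral_ne_zero {α : Type*} [MeasurableSpace α]
    {μ : Measure α} {f : α → ℝ} (hf : 0 ≤ᵐ[μ] f) (h : ∫ x, f x ∂μ ≠ 0) :
    ∫⁻ x, ENNReal.ofReal (f x) ∂μ = ENNReal.ofReal (∫ x, f x ∂μ) :=
  (ofReal_integral_eq_lintegral_ofReal (.of_integral_ne_zero h) hf).symm

lemma integrableOn_exp_neg_sq_sub_const_div (a : ℝ) :
    IntegrableOn (fun s ↦ exp (-(s - a / s) ^ 2)) (Ioi 0) := by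
  refine ((integrable_exp_neg_mul_sq one_pos).const_mul (exp (2 * a))).integrableOn.mono'
    (by fun_prop : Measurable fun s ↦ exp (-(s - a / s) ^ 2)).aestronglyMeasurable ?_
  filter_upwards [self_mem_ae_restrict measurableSet_Ioi] with s hs
  rw [norm_of_nonneg (exp_pos _).le, ← exp_add, exp_le_exp]
  have : s * (a / s) = a := mul_div_cancel₀ a (ne_of_gt hs)
  nlinarith [sq_nonneg (a / s)]

lemma integral_Ioi_exp_neg_sq_sub_const_div {a : ℝ} (ha : 0 ≤ a) :
    ∫ s in Ioi 0, exp (-(s - a / s) ^ 2) = √π / 2 := by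
  rcases ha.eq_or_lt with rfl | ha
  · simpa using integral_gaussian_Ioi 1
  set f := fun s ↦ exp (-(s - a / s) ^ 2) with hf
  -- `s ↦ a / s` preserves `f` and turns `ds` into `a / s ^ 2 ds`
  have hsymm : EqOn (fun s ↦ a / s ^ 2 * f (a / s)) (fun s ↦ a / s ^ 2 * f s) (Ioi 0) :=
    fun s hs ↦ by simp only [hf, div_div_cancel₀ ha.ne', ← neg_sub (a / s), neg_sq]
  have hJ := integrableOn_exp_neg_sq_sub_const_div a
  have hK : IntegrableOn (fun s ↦ a / s ^ 2 * f s) (Ioi 0) :=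
    ((integrableOn_Ioi_div_sq_mul_comp_const_div_iff ha f).mpr hJ).congr_fun hsymm
      measurableSet_Ioi
  have hKJ : ∫ s in Ioi 0, a / s ^ 2 * f s = ∫ s in Ioi 0, f s := by
    rw [← setIntegral_congr_fun measurableSet_Ioi hsymm, integral_Ioi_div_sq_mul_comp_const_div ha]
  have hsum : ∫ s in Ioi 0, (1 + a / s ^ 2) * f s = √π := by
    have hgauss := integral_gaussian 1
    simp only [neg_mul, one_mul, div_one] at hgauss
    rw [← hgauss, ← integral_Ioi_one_add_div_sq_mul_comp_sub_const_div ha]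
  simp_rw [add_mul, one_mul] at hsum
  rw [integral_add hJ hK, hKJ] at hsum
  linarith

lemma integral_Ioi_exp_neg_sub_div_mul_rpow_neg_half {c : ℝ} (hc : 0 ≤ c) :
    ∫ t in Ioi 0, exp (-t - c / t) * t ^ (-(1 / 2) : ℝ) = √π * exp (-2 * √c) := by
  -- substitute `t = s ^ 2`; the exponent becomes `-(s - √c / s) ^ 2 - 2 √c`
  rw [← integral_comp_rpow_Ioi_of_pos two_pos,
    show √π * exp (-2 * √c) = 2 * exp (-2 * √c) * (√π / 2) by ring,
    ← integral_Ioi_exp_neg_sq_sub_const_div (sqrt_nonneg c), ← integral_const_mul]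
  refine setIntegral_congr_fun measurableSet_Ioi fun s (hs : 0 < s) ↦ ?_
  have hsq : s ^ (2 : ℝ) = s ^ 2 := rpow_two s
  have hpow : (s ^ (2 : ℝ)) ^ (-(1 / 2) : ℝ) = s⁻¹ := by
    rw [← rpow_mul hs.le]; norm_num [rpow_neg_one]
  have hexp : -s ^ 2 - c / s ^ 2 = -(s - √c / s) ^ 2 + -2 * √c := by
    field_simp
    linear_combination sq_sqrt hc
  rw [hpow, hsq, hexp, exp_add, smul_eq_mul, show (2 : ℝ) - 1 = 1 by norm_num, rpow_one]
  field_simp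

lemma lintegral_ofReal_exp_neg_mul_rpow_mul_exp_neg_div {c : ℝ} (hc : 0 ≤ c) :
    ∫⁻ t in Ioi 0,
        ENNReal.ofReal (exp (-t) * t ^ (-(1 / 2) : ℝ)) * ENNReal.ofReal (exp (-(c / t))) =
      ENNReal.ofReal (√π * exp (-2 * √c)) := by
  have hint : ∫ t in Ioi 0, exp (-t - c / t) * t ^ (-(1 / 2) : ℝ) ≠ 0 := by
    rw [integral_Ioi_exp_neg_sub_div_mul_rpow_neg_half hc]; positivity
  rw [← integral_Ioi_exp_neg_sub_div_mul_rpow_neg_half hc,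
    ← lintegral_ofReal_eq_ofReal_integral_of_integral_ne_zero ?_ hint]
  · refine setLIntegral_congr_fun measurableSet_Ioi fun t (ht : 0 < t) ↦ ?_
    rw [← ENNReal.ofReal_mul (by positivity), sub_eq_add_neg, exp_add]
    ring_nf
  · filter_upwards [self_mem_ae_restrict measurableSet_Ioi] with t ht
    exact mul_nonneg (exp_pos _).le (rpow_nonneg (le_of_lt ht) _)

lemma lintegral_ofReal_rpow_mul_exp_neg_mul_exp_neg_mul {s c : ℝ} (hs : 0 < s) (hc : 0 ≤ c) :
    ∫⁻ t in Ioi 0, ENNReal.ofReal (t ^ (s - 1) * exp (-t)) * ENNReal.ofReal (exp (-(c * t))) =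
      ENNReal.ofReal (Gamma s * (1 + c) ^ (-s)) := by
  have hval := integral_rpow_mul_exp_neg_mul_Ioi hs (by positivity : 0 < 1 + c)
  rw [one_div, inv_rpow (by positivity), ← rpow_neg (by positivity), mul_comm] at hval
  have hint : ∫ t in Ioi 0, t ^ (s - 1) * exp (-((1 + c) * t)) ≠ 0 := by
    rw [hval]; exact (mul_pos (Gamma_pos_of_pos hs) (by positivity)).ne'
  rw [← hval, ← lintegral_ofReal_eq_ofReal_integral_of_integral_ne_zero ?_ hint]
  · refine setLIntegral_congr_fun measurableSet_Ioi fun t (ht : 0 < t) ↦ ?_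
    rw [← ENNReal.ofReal_mul (by positivity), mul_assoc, ← exp_add]
    ring_nf
  · filter_upwards [self_mem_ae_restrict measurableSet_Ioi] with t ht
    exact mul_nonneg (rpow_nonneg (le_of_lt ht) _) (exp_pos _).le

section Dirichlet

variable {ι : Type*} [Countable ι]

lemma ofReal_sqrt_pi_mul_tsum_exp_neg_two_mul_sqrt {c : ι → ℝ} (hc : ∀ i, 0 ≤ c i) :
    ENNReal.ofReal √π * ∑' i, ENNReal.ofReal (exp (-2 * √(c i))) =
      ∫⁻ t in Ioi 0, ENNReal.ofReal (exp (-t) * t ^ (-(1 / 2) : ℝ)) *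
        ∑' i, ENNReal.ofReal (exp (-(c i / t))) := by
  simp_rw [← ENNReal.tsum_mul_left]
  rw [lintegral_tsum fun i ↦ by fun_prop]
  refine tsum_congr fun i ↦ ?_
  rw [lintegral_ofReal_exp_neg_mul_rpow_mul_exp_neg_div (hc i),
    ENNReal.ofReal_mul (sqrt_nonneg _)]

lemma lintegral_rpow_mul_exp_neg_mul_tsum_exp_neg_mul {s : ℝ} (hs : 0 < s) {c : ι → ℝ}
    (hc : ∀ i, 0 ≤ c i) :
    ∫⁻ t in Ioi 0, ENNReal.ofReal (t ^ (s - 1) * exp (-t)) *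
        ∑' i, ENNReal.ofReal (exp (-(c i * t))) =
      ENNReal.ofReal (Gamma s) * ∑' i, ENNReal.ofReal ((1 + c i) ^ (-s)) := by
  simp_rw [← ENNReal.tsum_mul_left]
  rw [lintegral_tsum fun i ↦ by fun_prop]
  refine tsum_congr fun i ↦ ?_
  rw [lintegral_ofReal_rpow_mul_exp_neg_mul_exp_neg_mul hs (hc i),
    ENNReal.ofReal_mul (Gamma_pos_of_pos hs).le]

end Dirichlet

lemma one_add_div_rpow_neg {x β : ℝ} (s : ℝ) (hx : 0 ≤ x) (hβ : 0 < β) :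
    (1 + x / β) ^ (-s) = β ^ s * (x + β) ^ (-s) := by
  rw [show 1 + x / β = (x + β) / β by field_simp; ring, div_rpow (by positivity) hβ.le,
    rpow_neg hβ.le, div_inv_eq_mul, mul_comm]

lemma mul_rpow_neg_mul_rpow_add_half {x y : ℝ} (r : ℝ) (hx : 0 < x) (hy : 0 < y) :
    (x * y) ^ (-r) * y ^ (r + 1 / 2) = √x * √y / x ^ (r + 1 / 2) := by
  rw [mul_rpow hx.le hy.le, sqrt_eq_rpow, sqrt_eq_rpow, rpow_add hx, rpow_add hy, rpow_neg hx.le,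
    rpow_neg hy.le]
  field_simp

lemma tsum_lattice_ofReal_exp_neg_two_pi_sqrt (k : ℕ) {β : ℝ} (hβ : 0 < β) :
    ∑' v : Fin k → ℤ, ENNReal.ofReal (exp (-2 * π * √((∑ i, (v i : ℝ) ^ 2) * β))) =
      ENNReal.ofReal (√β * Gamma ((k + 1) / 2) / π ^ (((k : ℝ) + 1) / 2)) *
        ∑' v : Fin k → ℤ, ENNReal.ofReal ((∑ i, (v i : ℝ) ^ 2 + β) ^ (-(((k : ℝ) + 1) / 2))) := by
  set s : ℝ := ((k : ℝ) + 1) / 2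
  have hs : 0 < s := by positivity
  have hconst : (π * β) ^ (-(k / 2) : ℝ) * Gamma s * β ^ s = √π * (√β * Gamma s / π ^ s) := by
    have h := mul_rpow_neg_mul_rpow_add_half (k / 2) pi_pos hβ
    rw [show (k : ℝ) / 2 + 1 / 2 = s by ring] at h
    rw [mul_right_comm, h]
    ring
  refine (ENNReal.mul_right_inj (ENNReal.ofReal_pos.mpr (sqrt_pos.mpr pi_pos)).ne'
    ENNReal.ofReal_ne_top).mp ?_
  calc ENNReal.ofReal √π *
        ∑' v : Fin k → ℤ, ENNReal.ofReal (exp (-2 * π * √((∑ i, (v i : ℝ) ^ 2) * β)))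
      = ENNReal.ofReal √π *
          ∑' v : Fin k → ℤ, ENNReal.ofReal (exp (-2 * √(π ^ 2 * β * ∑ i, (v i : ℝ) ^ 2))) := by
        congr 1
        refine tsum_congr fun v ↦ ?_
        rw [show π ^ 2 * β * ∑ i, (v i : ℝ) ^ 2 = π ^ 2 * ((∑ i, (v i : ℝ) ^ 2) * β) by ring,
          sqrt_mul (sq_nonneg π), sqrt_sq pi_pos.le, mul_assoc]
    _ = ∫⁻ t in Ioi 0, ENNReal.ofReal (exp (-t) * t ^ (-(1 / 2) : ℝ)) *
          ∑' v : Fin k → ℤ, ENNReal.ofReal (exp (-(π ^ 2 * β * (∑ i, (v i : ℝ) ^ 2) / t))) :=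
        ofReal_sqrt_pi_mul_tsum_exp_neg_two_mul_sqrt fun v ↦ by positivity
    _ = ∫⁻ t in Ioi 0, ENNReal.ofReal ((π * β) ^ (-(k / 2) : ℝ)) *
          (ENNReal.ofReal (t ^ (s - 1) * exp (-t)) *
            ∑' v : Fin k → ℤ, ENNReal.ofReal (exp (-((∑ i, (v i : ℝ) ^ 2) / β * t)))) := by
        refine setLIntegral_congr_fun measurableSet_Ioi fun t (ht : 0 < t) ↦ ?_
        rw [tsum_lattice_ofReal_exp_neg_pi_sq_mul_div hβ ht, ← mul_assoc, ← mul_assoc,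
          ← ENNReal.ofReal_mul (by positivity), ← ENNReal.ofReal_mul (by positivity)]
        congr 2
        rw [show s - 1 = -(1 / 2) + k / 2 by ring, rpow_add ht]
        ring
    _ = ENNReal.ofReal ((π * β) ^ (-(k / 2) : ℝ)) * (ENNReal.ofReal (Gamma s) *
          ∑' v : Fin k → ℤ, ENNReal.ofReal ((1 + (∑ i, (v i : ℝ) ^ 2) / β) ^ (-s))) := by
        rw [lintegral_const_mul' _ _ ENNReal.ofReal_ne_top,
          lintegral_rpow_mul_exp_neg_mul_tsum_exp_neg_mul hs fun v ↦ by positivity]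
    _ = ENNReal.ofReal √π * (ENNReal.ofReal (√β * Gamma s / π ^ s) *
          ∑' v : Fin k → ℤ, ENNReal.ofReal ((∑ i, (v i : ℝ) ^ 2 + β) ^ (-s))) := by
        have hshift (v : Fin k → ℤ) :
            ENNReal.ofReal ((1 + (∑ i, (v i : ℝ) ^ 2) / β) ^ (-s)) =
              ENNReal.ofReal (β ^ s) * ENNReal.ofReal ((∑ i, (v i : ℝ) ^ 2 + β) ^ (-s)) := by
          rw [one_add_div_rpow_neg s (by positivity) hβ, ENNReal.ofReal_mul (by positivity)]
        rw [tsum_congr hshift, ENNReal.tsum_mul_left, ← mul_assoc, ← mul_assoc, ← mul_assoc,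
          ← ENNReal.ofReal_mul (by positivity), ← ENNReal.ofReal_mul (by positivity),
          ← ENNReal.ofReal_mul (by positivity), hconst]

theorem hardy_type_identity_general (k : ℕ) (β : ℝ) (hβ : 0 < β) :
    ∑' n : ℕ, (rsq k n : ℝ) * Real.exp (-2 * Real.pi * Real.sqrt (n * β)) =
      Real.sqrt β * Real.Gamma (((k : ℝ) + 1) / 2) / Real.pi ^ (((k : ℝ) + 1) / 2) *
        ∑' n : ℕ, (rsq k n : ℝ) / ((n : ℝ) + β) ^ (((k : ℝ) + 1) / 2) := by
  have hR : ∑' n : ℕ, (rsq k n : ℝ) / ((n : ℝ) + β) ^ (((k : ℝ) + 1) / 2) =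
      ∑' n : ℕ, (rsq k n : ℝ) * ((n : ℝ) + β) ^ (-(((k : ℝ) + 1) / 2)) :=
    tsum_congr fun n ↦ by rw [rpow_neg (by positivity), div_eq_mul_inv]
  rw [hR, tsum_rsq_mul_eq_toReal_tsum k (f := fun x ↦ exp (-2 * π * √(x * β)))
      fun n ↦ (exp_pos _).le,
    tsum_rsq_mul_eq_toReal_tsum k (f := fun x ↦ (x + β) ^ (-(((k : ℝ) + 1) / 2)))
      fun n ↦ rpow_nonneg (by positivity) _,
    tsum_lattice_ofReal_exp_neg_two_pi_sqrt k hβ, ENNReal.toReal_mul,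
    ENNReal.toReal_ofReal (by positivity)]

theorem hardy_type_identity (k : ℕ) (hk : 2 ≤ k) (β : ℝ) (hβ : 0 < β) :
    ∑' n : ℕ, (rsq k n : ℝ) * Real.exp (-2 * Real.pi * Real.sqrt (n * β)) =
      Real.sqrt β * Real.Gamma (((k : ℝ) + 1) / 2) / Real.pi ^ (((k : ℝ) + 1) / 2) *
        ∑' n : ℕ, (rsq k n : ℝ) / ((n : ℝ) + β) ^ (((k : ℝ) + 1) / 2) :=
  hardy_type_identity_general k β hβ
end
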